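/- For any 0 < ε < 1/16, the unique function f_ε : [0, T¹_ε(2)] → [0, T²_ε(2)] satisfying T²_ε(c) = f_ε(T¹_ε(2-c)) for all c ∈ [0,2] has strictly positive second derivative: f_ε''(x) > 0 for all x ∈ [0, T¹_ε(2)]; i.e., f_ε is strictly convex. -/

import Mathlib

/-- The complete elliptic integral of the first kind,
`K(m) = ∫₀¹ dζ / √((1-ζ²)(1-mζ²))`, defined for `m < 1`. -/
noncomputable def ellipticK (m : ℝ) : ℝ :=
  ∫ ζ in (0:ℝ)..1, 1 / Real.sqrt ((1 - ζ ^ 2) * (1 - m * ζ ^ 2))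

/-- `Φ(x) = K((1-√(1-x))/(1+√(1-x))) / √(1+√(1-x))`, defined for `x < 1`. -/
noncomputable def Phi (x : ℝ) : ℝ :=
  ellipticK ((1 - Real.sqrt (1 - x)) / (1 + Real.sqrt (1 - x))) /
    Real.sqrt (1 + Real.sqrt (1 - x))

/-- The period `τ¹_ε(c) = 2^{5/2} Φ(-8εc)`. -/
noncomputable def tau1 (ε c : ℝ) : ℝ := (2:ℝ) ^ ((5:ℝ) / 2) * Phi (-(8 * ε * c))

/-- The period `τ²_ε(c) = 2^{5/2} Φ(8εc)`. -/
noncomputable def tau2 (ε c : ℝ) : ℝ := (2:ℝ) ^ ((5:ℝ) / 2) * Phi (8 * ε * c)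

/-- The primitive `T¹_ε(c) = ∫₀ᶜ τ¹_ε(b) db`. -/
noncomputable def T1 (ε c : ℝ) : ℝ := ∫ b in (0:ℝ)..c, tau1 ε b

/-- The primitive `T²_ε(c) = ∫₀ᶜ τ²_ε(b) db`. -/
noncomputable def T2 (ε c : ℝ) : ℝ := ∫ b in (0:ℝ)..c, tau2 ε b

noncomputable def gP (x ζ : ℝ) : ℝ := (1 - ζ^2)^2 + Real.sqrt (1-x) * (1 - ζ^4)
noncomputable def gF (x ζ : ℝ) : ℝ := 1 / Real.sqrt (gP x ζ)
noncomputable def GG (x : ℝ) : ℝ := ∫ ζ in (0:ℝ)..1, gF x ζ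

lemma gP_nonneg {x : ℝ} {ζ : ℝ} (hζ : ζ ∈ Set.Icc (0:ℝ) 1) : 0 ≤ gP x ζ := by
  obtain ⟨h0, h1⟩ := hζ
  have hB : (0:ℝ) ≤ 1 - ζ^4 := by nlinarith [pow_le_one₀ h0 h1 (n:=4), sq_nonneg ζ]
  exact add_nonneg (sq_nonneg _) (mul_nonneg (Real.sqrt_nonneg _) hB)

lemma phi_rep {x : ℝ} (hx : x < 1) : Phi x = GG x := by
  have hs : 0 < Real.sqrt (1-x) := Real.sqrt_pos.2 (by linarith)
  set s := Real.sqrt (1-x) with hsdef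
  unfold Phi GG ellipticK
  rw [← intervalIntegral.integral_div]
  apply intervalIntegral.integral_congr
  intro ζ hζ
  rw [Set.uIcc_of_le (by norm_num : (0:ℝ) ≤ 1)] at hζ
  obtain ⟨h0, h1⟩ := hζ.imp id id
  have h1s : (0:ℝ) < 1 + s := by linarith
  have hm : (1 - ζ^2) * (1 - (1-s)/(1+s) * ζ^2) * (1+s) = gP x ζ := by
    unfold gP; field_simp; ring
  have hgP0 : 0 ≤ gP x ζ := gP_nonneg ⟨h0, h1⟩
  have hprod : 0 ≤ (1 - ζ^2) * (1 - (1-s)/(1+s) * ζ^2) := by nlinarith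
  rw [← hsdef]
  simp only [gF, div_div, ← Real.sqrt_mul hprod, hm]

noncomputable def gF1 (x ζ : ℝ) : ℝ :=
  (1 - ζ^4) / (4 * Real.sqrt (1-x) * Real.sqrt (gP x ζ)^3)
noncomputable def gF2 (x ζ : ℝ) : ℝ :=
  (1-ζ^4) / (8 * Real.sqrt (1-x)^3 * Real.sqrt (gP x ζ)^3)
    + 3*(1-ζ^4)^2 / (16 * Real.sqrt (1-x)^2 * Real.sqrt (gP x ζ)^5)
noncomputable def GG1 (x : ℝ) : ℝ := ∫ ζ in (0:ℝ)..1, gF1 x ζ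
noncomputable def GG2 (x : ℝ) : ℝ := ∫ ζ in (0:ℝ)..1, gF2 x ζ

lemma B_pos {ζ : ℝ} (hζ : ζ ∈ Set.Ico (0:ℝ) 1) : 0 < 1 - ζ^4 := by
  obtain ⟨h0, h1⟩ := hζ
  nlinarith [pow_lt_one₀ h0 h1 (n:=4) (by norm_num), sq_nonneg ζ]

lemma gP_pos {x ζ : ℝ} (hx : x < 1) (hζ : ζ ∈ Set.Ico (0:ℝ) 1) : 0 < gP x ζ := by
  have hs : 0 < Real.sqrt (1-x) := Real.sqrt_pos.2 (by linarith)
  have hB := B_pos hζ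
  have : 0 < Real.sqrt (1-x) * (1 - ζ^4) := mul_pos hs hB
  unfold gP; nlinarith [sq_nonneg (1 - ζ^2)]

lemma hasDerivAt_sqrt1x {x : ℝ} (hx : x < 1) :
    HasDerivAt (fun y => Real.sqrt (1-y)) (-(1/(2*Real.sqrt (1-x)))) x := by
  have h : HasDerivAt (fun y : ℝ => 1-y) (-1) x := by
    simpa using (hasDerivAt_id x).const_sub 1
  have := (Real.hasDerivAt_sqrt (by linarith : (1:ℝ)-x ≠ 0)).comp x h
  exact this.congr_deriv (by ring)

lemma hasDerivAt_gP {x : ℝ} (hx : x < 1) (ζ : ℝ) :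
    HasDerivAt (fun y => gP y ζ) (-((1-ζ^4)/(2*Real.sqrt (1-x)))) x := by
  have := ((hasDerivAt_sqrt1x hx).mul_const (1-ζ^4)).const_add ((1-ζ^2)^2)
  exact this.congr_deriv (by ring)

lemma hasDerivAt_gF {x ζ : ℝ} (hx : x < 1) (hζ : ζ ∈ Set.Ico (0:ℝ) 1) :
    HasDerivAt (fun y => gF y ζ) (gF1 x ζ) x := by
  have hs : 0 < Real.sqrt (1-x) := Real.sqrt_pos.2 (by linarith)
  have hgP := gP_pos hx hζ
  have hq : 0 < Real.sqrt (gP x ζ) := Real.sqrt_pos.2 hgP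
  have hq2 : Real.sqrt (gP x ζ) ^ 2 = gP x ζ := Real.sq_sqrt hgP.le
  have hQ : HasDerivAt (fun y => Real.sqrt (gP y ζ))
      ((-((1-ζ^4)/(2*Real.sqrt (1-x)))) / (2 * Real.sqrt (gP x ζ))) x := by
    have := (Real.hasDerivAt_sqrt hgP.ne').comp x (hasDerivAt_gP hx ζ)
    exact this.congr_deriv (by ring)
  have := hQ.inv hq.ne'
  have heq : ∀ y, gF y ζ = (Real.sqrt (gP y ζ))⁻¹ := fun y => one_div _
  simp only [gF, one_div]
  refine this.congr_deriv ?_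
  unfold gF1
  field_simp
  ring


lemma hasDerivAt_sqrtgP {x ζ : ℝ} (hx : x < 1) (hζ : ζ ∈ Set.Ico (0:ℝ) 1) :
    HasDerivAt (fun y => Real.sqrt (gP y ζ))
      ((-((1-ζ^4)/(2*Real.sqrt (1-x)))) / (2 * Real.sqrt (gP x ζ))) x := by
  have hgP := gP_pos hx hζ
  have := (Real.hasDerivAt_sqrt hgP.ne').comp x (hasDerivAt_gP hx ζ)
  exact this.congr_deriv (by ring)

lemma hasDerivAt_gF1 {x ζ : ℝ} (hx : x < 1) (hζ : ζ ∈ Set.Ico (0:ℝ) 1) :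
    HasDerivAt (fun y => gF1 y ζ) (gF2 x ζ) x := by
  have hs : 0 < Real.sqrt (1-x) := Real.sqrt_pos.2 (by linarith)
  have hgP := gP_pos hx hζ
  have hq : 0 < Real.sqrt (gP x ζ) := Real.sqrt_pos.2 hgP
  have hQ := hasDerivAt_sqrtgP hx hζ
  have hD : HasDerivAt (fun y => 4 * (Real.sqrt (1-y) * Real.sqrt (gP y ζ)^3))
      (4 * ((-(1/(2*Real.sqrt (1-x)))) * Real.sqrt (gP x ζ)^3 +
        Real.sqrt (1-x) * ((3:ℕ) * Real.sqrt (gP x ζ)^2 *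
          ((-((1-ζ^4)/(2*Real.sqrt (1-x)))) / (2 * Real.sqrt (gP x ζ)))))) x :=
    ((hasDerivAt_sqrt1x hx).mul (hQ.pow 3)).const_mul 4
  have hDne : 4 * (Real.sqrt (1-x) * Real.sqrt (gP x ζ)^3) ≠ 0 := by positivity
  have hres := (hD.inv hDne).const_mul (1-ζ^4)
  have hfun : (fun y => gF1 y ζ) =
      (fun y => (1-ζ^4) * (4 * (Real.sqrt (1-y) * Real.sqrt (gP y ζ)^3))⁻¹) := by
    funext y; unfold gF1; rw [div_eq_mul_inv]; ring_nf
  rw [hfun]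
  refine hres.congr_deriv ?_
  have hq2 : Real.sqrt (gP x ζ) ^ 2 = gP x ζ := Real.sq_sqrt hgP.le
  unfold gF2
  field_simp
  ring

open MeasureTheory intervalIntegral Set

lemma integrable_inv_sqrt_one_sub :
    IntervalIntegrable (fun t : ℝ => 1 / Real.sqrt (1-t)) volume 0 1 := by
  have h : IntervalIntegrable (fun t : ℝ => t ^ (-(1/2) : ℝ)) volume 0 1 :=
    intervalIntegrable_rpow' (by norm_num)
  have h2 := (h.comp_sub_left 1).symm
  norm_num at h2
  rw [intervalIntegrable_iff] at h2 ⊢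
  apply h2.congr_fun ?_ measurableSet_uIoc
  intro t ht
  rw [Set.uIoc_of_le (by norm_num : (0:ℝ) ≤ 1)] at ht
  have h1t : 0 ≤ 1 - t := by linarith [ht.2]
  simp only [Real.rpow_neg h1t, Real.sqrt_eq_rpow, one_div]

lemma gP_facts {sm x t : ℝ} (hsm : 0 < sm) (hs : sm ≤ Real.sqrt (1-x))
    (ht : t ∈ Set.Ioo (0:ℝ) 1) :
    0 < gP x t ∧ Real.sqrt sm * Real.sqrt (1-t) ≤ Real.sqrt (gP x t) ∧
      sm * (1-t^4) ≤ Real.sqrt (gP x t)^2 := by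
  have ht0 := ht.1
  have h1t : 0 < 1 - t := by linarith [ht.2]
  have hB : 0 < 1 - t^4 := B_pos ⟨ht0.le, ht.2⟩
  have htB : 1 - t ≤ 1 - t^4 := by nlinarith [pow_le_one₀ ht0.le ht.2.le (n:=3), ht0]
  have hsB : Real.sqrt (1-x) * (1-t^4) ≤ gP x t := by
    unfold gP; nlinarith [sq_nonneg (1-t^2)]
  have h2 : sm * (1-t^4) ≤ gP x t :=
    le_trans (mul_le_mul_of_nonneg_right hs hB.le) hsB
  have h3 : sm * (1-t) ≤ gP x t := le_trans (by nlinarith) h2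
  have hgPpos : 0 < gP x t := lt_of_lt_of_le (by positivity) h3
  refine ⟨hgPpos, ?_, ?_⟩
  · rw [← Real.sqrt_mul hsm.le]
    exact Real.sqrt_le_sqrt h3
  · rw [Real.sq_sqrt hgPpos.le]; exact h2

lemma gF_bound {sm x t : ℝ} (hsm : 0 < sm) (hs : sm ≤ Real.sqrt (1-x))
    (ht : t ∈ Set.Ioo (0:ℝ) 1) :
    ‖gF x t‖ ≤ (Real.sqrt sm)⁻¹ * (1 / Real.sqrt (1-t)) := by
  obtain ⟨hgPpos, hq_ge, _⟩ := gP_facts hsm hs ht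
  have h1t : 0 < 1 - t := by linarith [ht.2]
  have hqpos : 0 < Real.sqrt sm * Real.sqrt (1-t) := by positivity
  unfold gF
  rw [Real.norm_eq_abs, abs_of_nonneg (by positivity)]
  calc 1 / Real.sqrt (gP x t) ≤ 1 / (Real.sqrt sm * Real.sqrt (1-t)) :=
        one_div_le_one_div_of_le hqpos hq_ge
    _ = (Real.sqrt sm)⁻¹ * (1 / Real.sqrt (1-t)) := by
        rw [one_div, mul_inv, one_div]

lemma gF1_bound {sm x t : ℝ} (hsm : 0 < sm) (hs : sm ≤ Real.sqrt (1-x))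
    (ht : t ∈ Set.Ioo (0:ℝ) 1) :
    ‖gF1 x t‖ ≤ (4 * sm^2 * Real.sqrt sm)⁻¹ * (1 / Real.sqrt (1-t)) := by
  obtain ⟨hgPpos, hq_ge, hq2_ge⟩ := gP_facts hsm hs ht
  have h1t : 0 < 1 - t := by linarith [ht.2]
  have hB : 0 < 1 - t^4 := B_pos ⟨ht.1.le, ht.2⟩
  have hq : 0 < Real.sqrt (gP x t) := Real.sqrt_pos.2 hgPpos
  have hqpos : 0 < Real.sqrt sm * Real.sqrt (1-t) := by positivity
  have hspos : 0 < Real.sqrt (1-x) := lt_of_lt_of_le hsm hs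
  have hq3 : sm * (1-t^4) * (Real.sqrt sm * Real.sqrt (1-t)) ≤ Real.sqrt (gP x t)^3 := by
    have := mul_le_mul hq2_ge hq_ge hqpos.le (sq_nonneg _)
    nlinarith [this]
  have hle : 4 * sm * (sm * (1-t^4) * (Real.sqrt sm * Real.sqrt (1-t)))
      ≤ 4 * Real.sqrt (1-x) * Real.sqrt (gP x t)^3 := by
    have h1 : 0 ≤ sm * (1-t^4) * (Real.sqrt sm * Real.sqrt (1-t)) := by positivity
    nlinarith [mul_le_mul hs hq3 h1 hspos.le]
  unfold gF1
  rw [Real.norm_eq_abs, abs_of_nonneg (by positivity)]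
  calc (1-t^4) / (4 * Real.sqrt (1-x) * Real.sqrt (gP x t)^3)
      ≤ (1-t^4) / (4 * sm * (sm * (1-t^4) * (Real.sqrt sm * Real.sqrt (1-t)))) := by
        apply div_le_div_of_nonneg_left hB.le (by positivity) hle
    _ = (4 * sm^2 * Real.sqrt sm)⁻¹ * (1 / Real.sqrt (1-t)) := by
        have hsm' : Real.sqrt sm ≠ 0 := (Real.sqrt_pos.2 hsm).ne'
        have h1t' : Real.sqrt (1-t) ≠ 0 := (Real.sqrt_pos.2 h1t).ne'
        field_simp

lemma gF2_bound {sm x t : ℝ} (hsm : 0 < sm) (hs : sm ≤ Real.sqrt (1-x))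
    (ht : t ∈ Set.Ioo (0:ℝ) 1) :
    ‖gF2 x t‖ ≤ (sm^4 * Real.sqrt sm)⁻¹ * (1 / Real.sqrt (1-t)) := by
  obtain ⟨hgPpos, hq_ge, hq2_ge⟩ := gP_facts hsm hs ht
  have h1t : 0 < 1 - t := by linarith [ht.2]
  have hB : 0 < 1 - t^4 := B_pos ⟨ht.1.le, ht.2⟩
  have hq : 0 < Real.sqrt (gP x t) := Real.sqrt_pos.2 hgPpos
  have hqpos : 0 < Real.sqrt sm * Real.sqrt (1-t) := by positivity
  have hspos : 0 < Real.sqrt (1-x) := lt_of_lt_of_le hsm hs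
  have hsm' : Real.sqrt sm ≠ 0 := (Real.sqrt_pos.2 hsm).ne'
  have h1t' : Real.sqrt (1-t) ≠ 0 := (Real.sqrt_pos.2 h1t).ne'
  have hq3 : sm * (1-t^4) * (Real.sqrt sm * Real.sqrt (1-t)) ≤ Real.sqrt (gP x t)^3 := by
    nlinarith [mul_le_mul hq2_ge hq_ge hqpos.le (sq_nonneg (Real.sqrt (gP x t)))]
  have hq5 : (sm * (1-t^4))^2 * (Real.sqrt sm * Real.sqrt (1-t)) ≤ Real.sqrt (gP x t)^5 := by
    have hA2 : (sm * (1-t^4))^2 ≤ (Real.sqrt (gP x t)^2)^2 :=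
      pow_le_pow_left₀ (by positivity) hq2_ge 2
    nlinarith [mul_le_mul hA2 hq_ge hqpos.le (sq_nonneg (Real.sqrt (gP x t)^2))]
  have h1 : (1-t^4) / (8 * Real.sqrt (1-x)^3 * Real.sqrt (gP x t)^3)
      ≤ (8*(sm^4 * Real.sqrt sm))⁻¹ * (1 / Real.sqrt (1-t)) := by
    have hle1 : 8 * sm^3 * (sm * (1-t^4) * (Real.sqrt sm * Real.sqrt (1-t)))
        ≤ 8 * Real.sqrt (1-x)^3 * Real.sqrt (gP x t)^3 := by
      nlinarith [mul_le_mul (pow_le_pow_left₀ hsm.le hs 3) hq3 (by positivity :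
        (0:ℝ) ≤ sm * (1-t^4) * (Real.sqrt sm * Real.sqrt (1-t))) (by positivity :
        (0:ℝ) ≤ Real.sqrt (1-x)^3)]
    calc (1-t^4) / (8 * Real.sqrt (1-x)^3 * Real.sqrt (gP x t)^3)
        ≤ (1-t^4) / (8 * sm^3 * (sm * (1-t^4) * (Real.sqrt sm * Real.sqrt (1-t)))) :=
          div_le_div_of_nonneg_left hB.le (by positivity) hle1
      _ = (8*(sm^4 * Real.sqrt sm))⁻¹ * (1 / Real.sqrt (1-t)) := by
          field_simp
  have h2 : 3*(1-t^4)^2 / (16 * Real.sqrt (1-x)^2 * Real.sqrt (gP x t)^5)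
      ≤ 3*(16*(sm^4 * Real.sqrt sm))⁻¹ * (1 / Real.sqrt (1-t)) := by
    have hle2 : 16 * sm^2 * ((sm * (1-t^4))^2 * (Real.sqrt sm * Real.sqrt (1-t)))
        ≤ 16 * Real.sqrt (1-x)^2 * Real.sqrt (gP x t)^5 := by
      nlinarith [mul_le_mul (pow_le_pow_left₀ hsm.le hs 2) hq5 (by positivity :
        (0:ℝ) ≤ (sm * (1-t^4))^2 * (Real.sqrt sm * Real.sqrt (1-t))) (by positivity :
        (0:ℝ) ≤ Real.sqrt (1-x)^2)]
    calc 3*(1-t^4)^2 / (16 * Real.sqrt (1-x)^2 * Real.sqrt (gP x t)^5)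
        ≤ 3*(1-t^4)^2 / (16 * sm^2 * ((sm * (1-t^4))^2 * (Real.sqrt sm * Real.sqrt (1-t)))) :=
          div_le_div_of_nonneg_left (by positivity) (by positivity) hle2
      _ = 3*(16*(sm^4 * Real.sqrt sm))⁻¹ * (1 / Real.sqrt (1-t)) := by
          field_simp
  have hnorm : ‖gF2 x t‖ = gF2 x t := by
    rw [Real.norm_eq_abs, abs_of_nonneg]; unfold gF2; positivity
  rw [hnorm]
  unfold gF2
  have hu : 0 < sm^4 * Real.sqrt sm := by positivity
  have hv : (0:ℝ) ≤ 1 / Real.sqrt (1-t) := by positivity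
  have hco : (8*(sm^4 * Real.sqrt sm))⁻¹ + 3*(16*(sm^4 * Real.sqrt sm))⁻¹
      ≤ (sm^4 * Real.sqrt sm)⁻¹ := by
    have hw : (0:ℝ) ≤ (sm^4 * Real.sqrt sm)⁻¹ := (inv_pos.2 hu).le
    calc (8*(sm^4 * Real.sqrt sm))⁻¹ + 3*(16*(sm^4 * Real.sqrt sm))⁻¹
        = (5/16) * (sm^4 * Real.sqrt sm)⁻¹ := by rw [mul_inv, mul_inv]; ring
      _ ≤ (sm^4 * Real.sqrt sm)⁻¹ := by nlinarith [hw]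
  nlinarith [add_le_add h1 h2, mul_le_mul_of_nonneg_right hco hv]

lemma cont_gP (x : ℝ) : Continuous (fun ζ : ℝ => gP x ζ) := by
  unfold gP; fun_prop

lemma meas_gF (x : ℝ) : Measurable (gF x) := by
  unfold gF
  exact measurable_const.div (Real.continuous_sqrt.comp (cont_gP x)).measurable

lemma meas_gF1 (x : ℝ) : Measurable (gF1 x) := by
  unfold gF1
  have hden : Continuous fun ζ : ℝ => 4 * Real.sqrt (1-x) * Real.sqrt (gP x ζ)^3 :=
    continuous_const.mul ((Real.continuous_sqrt.comp (cont_gP x)).pow 3)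
  exact (by fun_prop : Measurable fun ζ : ℝ => 1 - ζ^4).div hden.measurable

lemma meas_gF2 (x : ℝ) : Measurable (gF2 x) := by
  unfold gF2
  have hden1 : Continuous fun ζ : ℝ => 8 * Real.sqrt (1-x)^3 * Real.sqrt (gP x ζ)^3 :=
    continuous_const.mul ((Real.continuous_sqrt.comp (cont_gP x)).pow 3)
  have hden2 : Continuous fun ζ : ℝ => 16 * Real.sqrt (1-x)^2 * Real.sqrt (gP x ζ)^5 :=
    continuous_const.mul ((Real.continuous_sqrt.comp (cont_gP x)).pow 5)
  exact ((by fun_prop : Measurable fun ζ : ℝ => 1 - ζ^4).div hden1.measurable).add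
    ((by fun_prop : Measurable fun ζ : ℝ => 3*(1 - ζ^4)^2).div hden2.measurable)

lemma ae_ne_one : ∀ᵐ t : ℝ ∂volume, t ≠ 1 := by
  refine MeasureTheory.ae_iff.mpr ?_
  have : {t : ℝ | ¬ t ≠ 1} = {1} := by ext t; simp
  rw [this]
  exact measure_singleton 1

lemma intervalIntegrable_of_bound (f : ℝ → ℝ) (C : ℝ) (hmeas : Measurable f)
    (hbd : ∀ t ∈ Set.Ioo (0:ℝ) 1, ‖f t‖ ≤ C * (1 / Real.sqrt (1-t))) :
    IntervalIntegrable f volume 0 1 := by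
  have hint := integrable_inv_sqrt_one_sub.const_mul C
  rw [intervalIntegrable_iff] at hint ⊢
  apply Integrable.mono' hint hmeas.aestronglyMeasurable
  rw [Set.uIoc_of_le (by norm_num : (0:ℝ) ≤ 1)]
  refine (ae_restrict_iff' measurableSet_Ioc).2 ?_
  filter_upwards [ae_ne_one] with t htne htIoc
  exact hbd t ⟨htIoc.1, lt_of_le_of_ne htIoc.2 htne⟩

lemma ball_facts {x₀ : ℝ} (hx : x₀ < 1) :
    ∀ x ∈ Metric.ball x₀ ((1-x₀)/2), x < 1 ∧ Real.sqrt ((1-x₀)/2) ≤ Real.sqrt (1-x) := by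
  intro x hx'
  rw [Metric.mem_ball, Real.dist_eq, abs_lt] at hx'
  constructor
  · linarith [hx'.2]
  · exact Real.sqrt_le_sqrt (by linarith [hx'.2])

lemma intervalIntegrable_gF {x : ℝ} (hx : x < 1) :
    IntervalIntegrable (gF x) volume 0 1 := by
  have hδ : 0 < (1-x)/2 := by linarith
  have hsm : 0 < Real.sqrt ((1-x)/2) := Real.sqrt_pos.2 hδ
  exact intervalIntegrable_of_bound _ _ (meas_gF x)
    (fun t ht => gF_bound hsm (Real.sqrt_le_sqrt (by linarith)) ht)

lemma intervalIntegrable_gF1 {x : ℝ} (hx : x < 1) :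
    IntervalIntegrable (gF1 x) volume 0 1 := by
  have hδ : 0 < (1-x)/2 := by linarith
  have hsm : 0 < Real.sqrt ((1-x)/2) := Real.sqrt_pos.2 hδ
  exact intervalIntegrable_of_bound _ _ (meas_gF1 x)
    (fun t ht => gF1_bound hsm (Real.sqrt_le_sqrt (by linarith)) ht)

lemma intervalIntegrable_gF2 {x : ℝ} (hx : x < 1) :
    IntervalIntegrable (gF2 x) volume 0 1 := by
  have hδ : 0 < (1-x)/2 := by linarith
  have hsm : 0 < Real.sqrt ((1-x)/2) := Real.sqrt_pos.2 hδ
  exact intervalIntegrable_of_bound _ _ (meas_gF2 x)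
    (fun t ht => gF2_bound hsm (Real.sqrt_le_sqrt (by linarith)) ht)

theorem hasDerivAt_GG {x₀ : ℝ} (hx : x₀ < 1) : HasDerivAt GG (GG1 x₀) x₀ := by
  have hδ : 0 < (1-x₀)/2 := by linarith
  have hsm : 0 < Real.sqrt ((1-x₀)/2) := Real.sqrt_pos.2 hδ
  have key := intervalIntegral.hasDerivAt_integral_of_dominated_loc_of_deriv_le
    (μ := volume) (F := fun x t => gF x t) (F' := fun x t => gF1 x t) (a := 0) (b := 1)
    (x₀ := x₀)
    (bound := fun t => (4 * Real.sqrt ((1-x₀)/2)^2 * Real.sqrt (Real.sqrt ((1-x₀)/2)))⁻¹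
      * (1 / Real.sqrt (1-t)))
    (Metric.ball_mem_nhds x₀ hδ)
    (Filter.Eventually.of_forall fun x => (meas_gF x).aestronglyMeasurable)
    (intervalIntegrable_gF hx)
    ((meas_gF1 x₀).aestronglyMeasurable)
    ?_ (integrable_inv_sqrt_one_sub.const_mul _) ?_
  · exact key.2
  · filter_upwards [ae_ne_one] with t htne htI x hxb
    rw [Set.uIoc_of_le (by norm_num : (0:ℝ) ≤ 1)] at htI
    obtain ⟨hlt, hsle⟩ := ball_facts hx x hxb
    exact gF1_bound hsm hsle ⟨htI.1, lt_of_le_of_ne htI.2 htne⟩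
  · filter_upwards [ae_ne_one] with t htne htI x hxb
    rw [Set.uIoc_of_le (by norm_num : (0:ℝ) ≤ 1)] at htI
    obtain ⟨hlt, hsle⟩ := ball_facts hx x hxb
    exact hasDerivAt_gF hlt ⟨htI.1.le, lt_of_le_of_ne htI.2 htne⟩

theorem hasDerivAt_GG1 {x₀ : ℝ} (hx : x₀ < 1) : HasDerivAt GG1 (GG2 x₀) x₀ := by
  have hδ : 0 < (1-x₀)/2 := by linarith
  have hsm : 0 < Real.sqrt ((1-x₀)/2) := Real.sqrt_pos.2 hδ
  have key := intervalIntegral.hasDerivAt_integral_of_dominated_loc_of_deriv_le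
    (μ := volume) (F := fun x t => gF1 x t) (F' := fun x t => gF2 x t) (a := 0) (b := 1)
    (x₀ := x₀)
    (bound := fun t => (Real.sqrt ((1-x₀)/2)^4 * Real.sqrt (Real.sqrt ((1-x₀)/2)))⁻¹
      * (1 / Real.sqrt (1-t)))
    (Metric.ball_mem_nhds x₀ hδ)
    (Filter.Eventually.of_forall fun x => (meas_gF1 x).aestronglyMeasurable)
    (intervalIntegrable_gF1 hx)
    ((meas_gF2 x₀).aestronglyMeasurable)
    ?_ (integrable_inv_sqrt_one_sub.const_mul _) ?_
  · exact key.2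
  · filter_upwards [ae_ne_one] with t htne htI x hxb
    rw [Set.uIoc_of_le (by norm_num : (0:ℝ) ≤ 1)] at htI
    obtain ⟨hlt, hsle⟩ := ball_facts hx x hxb
    exact gF2_bound hsm hsle ⟨htI.1, lt_of_le_of_ne htI.2 htne⟩
  · filter_upwards [ae_ne_one] with t htne htI x hxb
    rw [Set.uIoc_of_le (by norm_num : (0:ℝ) ≤ 1)] at htI
    obtain ⟨hlt, hsle⟩ := ball_facts hx x hxb
    exact hasDerivAt_gF1 hlt ⟨htI.1.le, lt_of_le_of_ne htI.2 htne⟩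

lemma gF_nonneg (x t : ℝ) : 0 ≤ gF x t := by unfold gF; positivity

lemma gF_pos {x t : ℝ} (hx : x < 1) (ht : t ∈ Set.Ioo (0:ℝ) 1) : 0 < gF x t := by
  have := gP_pos hx ⟨ht.1.le, ht.2⟩
  unfold gF; positivity

lemma GG_pos {x : ℝ} (hx : x < 1) : 0 < GG x :=
  intervalIntegral_pos_of_pos_on (intervalIntegrable_gF hx)
    (fun t ht => gF_pos hx ht) one_pos

noncomputable def rr (x t : ℝ) : ℝ := (1-t^4) / (4 * Real.sqrt (1-x) * gP x t)
noncomputable def qq (x t : ℝ) : ℝ :=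
  (1-t^4) / (8 * Real.sqrt (1-x)^3 * gP x t) * gF x t
    + (1-t^4)^2 / (8 * Real.sqrt (1-x)^2 * gP x t^2) * gF x t

lemma gP_one (x : ℝ) : gP x 1 = 0 := by unfold gP; norm_num

lemma rr_gF {x t : ℝ} (hx : x < 1) (ht : t ∈ Set.Icc (0:ℝ) 1) :
    gF1 x t = rr x t * gF x t := by
  rcases eq_or_lt_of_le ht.2 with h1 | h1
  · subst h1; simp [gF1, rr]
  · have hgP := gP_pos hx ⟨ht.1, h1⟩
    have hs : 0 < Real.sqrt (1-x) := Real.sqrt_pos.2 (by linarith)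
    have hq : 0 < Real.sqrt (gP x t) := Real.sqrt_pos.2 hgP
    have hq2 : Real.sqrt (gP x t)^2 = gP x t := Real.sq_sqrt hgP.le
    have hq3 : Real.sqrt (gP x t)^3 = gP x t * Real.sqrt (gP x t) := by
      calc Real.sqrt (gP x t)^3 = Real.sqrt (gP x t)^2 * Real.sqrt (gP x t) := by ring
        _ = gP x t * Real.sqrt (gP x t) := by rw [hq2]
    unfold gF1 rr gF
    rw [hq3]
    field_simp

lemma qq_gF2 {x t : ℝ} (hx : x < 1) (ht : t ∈ Set.Icc (0:ℝ) 1) :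
    gF2 x t = rr x t^2 * gF x t + qq x t := by
  rcases eq_or_lt_of_le ht.2 with h1 | h1
  · subst h1; simp [gF2, rr, qq, gF, gP_one]
  · have hgP := gP_pos hx ⟨ht.1, h1⟩
    have hs : 0 < Real.sqrt (1-x) := Real.sqrt_pos.2 (by linarith)
    have hq : 0 < Real.sqrt (gP x t) := Real.sqrt_pos.2 hgP
    have hq2 : Real.sqrt (gP x t)^2 = gP x t := Real.sq_sqrt hgP.le
    have hq3 : Real.sqrt (gP x t)^3 = gP x t * Real.sqrt (gP x t) := by
      calc Real.sqrt (gP x t)^3 = Real.sqrt (gP x t)^2 * Real.sqrt (gP x t) := by ring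
        _ = gP x t * Real.sqrt (gP x t) := by rw [hq2]
    have hq5 : Real.sqrt (gP x t)^5 = gP x t^2 * Real.sqrt (gP x t) := by
      calc Real.sqrt (gP x t)^5
          = (Real.sqrt (gP x t)^2)^2 * Real.sqrt (gP x t) := by ring
        _ = gP x t^2 * Real.sqrt (gP x t) := by rw [hq2]
    unfold gF2 rr qq gF
    rw [hq3, hq5]
    field_simp
    ring

lemma meas_rr2gF (x : ℝ) : Measurable (fun t => rr x t^2 * gF x t) := by
  have : Measurable (rr x) := by
    unfold rr
    exact (by fun_prop : Measurable fun t : ℝ => 1 - t^4).div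
      ((continuous_const.mul (cont_gP x)).measurable)
  exact (this.pow_const 2).mul (meas_gF x)

lemma meas_qq (x : ℝ) : Measurable (qq x) := by
  unfold qq
  apply Measurable.add
  · exact (((by fun_prop : Measurable fun t : ℝ => 1 - t^4).div
      ((continuous_const.mul (cont_gP x)).measurable)).mul (meas_gF x))
  · exact (((by fun_prop : Measurable fun t : ℝ => (1 - t^4)^2).div
      ((continuous_const.mul ((cont_gP x).pow 2)).measurable)).mul (meas_gF x))

lemma qq_nonneg {x t : ℝ} (hx : x < 1) (ht : t ∈ Set.Icc (0:ℝ) 1) : 0 ≤ qq x t := by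
  rcases eq_or_lt_of_le ht.2 with h1 | h1
  · subst h1; simp [qq, gF, gP_one]
  · have hgP := gP_pos hx ⟨ht.1, h1⟩
    have hB : 0 < 1 - t^4 := B_pos ⟨ht.1, h1⟩
    have hs : 0 < Real.sqrt (1-x) := Real.sqrt_pos.2 (by linarith)
    have hgf := gF_nonneg x t
    unfold qq
    positivity

lemma qq_pos {x t : ℝ} (hx : x < 1) (ht : t ∈ Set.Ioo (0:ℝ) 1) : 0 < qq x t := by
  have hgP := gP_pos hx ⟨ht.1.le, ht.2⟩
  have hB : 0 < 1 - t^4 := B_pos ⟨ht.1.le, ht.2⟩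
  have hs : 0 < Real.sqrt (1-x) := Real.sqrt_pos.2 (by linarith)
  have hgf := gF_pos hx ht
  unfold qq
  positivity

lemma rr2gF_nonneg (x t : ℝ) : 0 ≤ rr x t^2 * gF x t :=
  mul_nonneg (sq_nonneg _) (gF_nonneg x t)

lemma intervalIntegrable_rr2gF {x : ℝ} (hx : x < 1) :
    IntervalIntegrable (fun t => rr x t^2 * gF x t) volume 0 1 := by
  have hδ : 0 < (1-x)/2 := by linarith
  have hsm : 0 < Real.sqrt ((1-x)/2) := Real.sqrt_pos.2 hδ
  apply intervalIntegrable_of_bound _ ((Real.sqrt ((1-x)/2)^4 * Real.sqrt (Real.sqrt ((1-x)/2)))⁻¹)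
    (meas_rr2gF x)
  intro t ht
  have hle : rr x t^2 * gF x t ≤ gF2 x t := by
    have := qq_nonneg hx (Set.mem_Icc.2 ⟨ht.1.le, ht.2.le⟩)
    have := qq_gF2 hx (Set.mem_Icc.2 ⟨ht.1.le, ht.2.le⟩)
    linarith
  rw [Real.norm_eq_abs, abs_of_nonneg (rr2gF_nonneg x t)]
  calc rr x t^2 * gF x t ≤ gF2 x t := hle
    _ ≤ ‖gF2 x t‖ := le_abs_self _
    _ ≤ _ := gF2_bound hsm (Real.sqrt_le_sqrt (by linarith)) ht

lemma intervalIntegrable_qq {x : ℝ} (hx : x < 1) :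
    IntervalIntegrable (qq x) volume 0 1 := by
  have hδ : 0 < (1-x)/2 := by linarith
  have hsm : 0 < Real.sqrt ((1-x)/2) := Real.sqrt_pos.2 hδ
  apply intervalIntegrable_of_bound _ ((Real.sqrt ((1-x)/2)^4 * Real.sqrt (Real.sqrt ((1-x)/2)))⁻¹)
    (meas_qq x)
  intro t ht
  have hle : qq x t ≤ gF2 x t := by
    have := rr2gF_nonneg x t
    have := qq_gF2 hx (Set.mem_Icc.2 ⟨ht.1.le, ht.2.le⟩)
    linarith
  rw [Real.norm_eq_abs, abs_of_nonneg (qq_nonneg hx (Set.mem_Icc.2 ⟨ht.1.le, ht.2.le⟩))]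
  calc qq x t ≤ gF2 x t := hle
    _ ≤ ‖gF2 x t‖ := le_abs_self _
    _ ≤ _ := gF2_bound hsm (Real.sqrt_le_sqrt (by linarith)) ht

theorem turan {x : ℝ} (hx : x < 1) : GG1 x^2 < GG2 x * GG x := by
  have hGG := GG_pos hx
  set lam := GG1 x / GG x with hlam
  have hint_rr2 := intervalIntegrable_rr2gF hx
  have hint_qq := intervalIntegrable_qq hx
  have hint_gF := intervalIntegrable_gF hx
  have hint_gF1 := intervalIntegrable_gF1 hx
  have h0 : 0 ≤ ∫ t in (0:ℝ)..1,
      (rr x t^2 * gF x t - 2*lam*(gF1 x t) + lam^2*(gF x t)) := by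
    have hcongr : Set.EqOn (fun t => gF x t * (rr x t - lam)^2)
        (fun t => rr x t^2 * gF x t - 2*lam*(gF1 x t) + lam^2*(gF x t))
        (Set.uIcc (0:ℝ) 1) := by
      intro t ht
      rw [Set.uIcc_of_le (by norm_num : (0:ℝ) ≤ 1)] at ht
      simp only
      rw [rr_gF hx ht]
      ring
    calc (0:ℝ) ≤ ∫ t in (0:ℝ)..1, gF x t * (rr x t - lam)^2 :=
          intervalIntegral.integral_nonneg (by norm_num)
            (fun u _ => mul_nonneg (gF_nonneg x u) (sq_nonneg _))
      _ = _ := intervalIntegral.integral_congr hcongr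
  have hsplit : (∫ t in (0:ℝ)..1,
      (rr x t^2 * gF x t - 2*lam*(gF1 x t) + lam^2*(gF x t)))
      = (∫ t in (0:ℝ)..1, rr x t^2 * gF x t) - 2*lam*GG1 x + lam^2*GG x := by
    rw [intervalIntegral.integral_add ((hint_rr2).sub ((hint_gF1.const_mul (2*lam))))
      (hint_gF.const_mul (lam^2)),
      intervalIntegral.integral_sub hint_rr2 (hint_gF1.const_mul (2*lam)),
      intervalIntegral.integral_const_mul, intervalIntegral.integral_const_mul]
    rfl
  have hI2 : GG1 x^2 ≤ (∫ t in (0:ℝ)..1, rr x t^2 * gF x t) * GG x := by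
    rw [hsplit] at h0
    have hexp : 2*lam*GG1 x - lam^2*GG x = GG1 x^2 / GG x := by
      rw [hlam]; field_simp; ring
    have h3 : GG1 x^2 / GG x ≤ ∫ t in (0:ℝ)..1, rr x t^2 * gF x t := by linarith
    calc GG1 x^2 = (GG1 x^2 / GG x) * GG x := by field_simp
      _ ≤ _ := mul_le_mul_of_nonneg_right h3 hGG.le
  have hqq_pos : 0 < ∫ t in (0:ℝ)..1, qq x t :=
    intervalIntegral_pos_of_pos_on hint_qq (fun t ht => qq_pos hx ht) one_pos
  have hGG2 : GG2 x = (∫ t in (0:ℝ)..1, rr x t^2 * gF x t) + ∫ t in (0:ℝ)..1, qq x t := by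
    have hcongr : Set.EqOn (gF2 x) (fun t => rr x t^2 * gF x t + qq x t)
        (Set.uIcc (0:ℝ) 1) := by
      intro t ht
      rw [Set.uIcc_of_le (by norm_num : (0:ℝ) ≤ 1)] at ht
      exact qq_gF2 hx ht
    rw [GG2, intervalIntegral.integral_congr hcongr,
      intervalIntegral.integral_add hint_rr2 hint_qq]
  nlinarith [hI2, hqq_pos, hGG2, hGG]

theorem ratio_mono : StrictMonoOn (fun y => GG1 y / GG y) (Set.Iio (1:ℝ)) := by
  apply strictMonoOn_of_deriv_pos (convex_Iio 1)
  · intro y hy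
    have hy' : y < 1 := hy
    exact ((hasDerivAt_GG1 hy').continuousAt.div
      (hasDerivAt_GG hy').continuousAt (GG_pos hy').ne').continuousWithinAt
  · intro y hy
    rw [interior_Iio] at hy
    have hy' : y < 1 := hy
    have hd := (hasDerivAt_GG1 hy').div (hasDerivAt_GG hy') (GG_pos hy').ne'
    rw [(show HasDerivAt (fun y => GG1 y / GG y) _ y from hd).deriv]
    have := turan hy'
    have hGG := GG_pos hy'
    apply div_pos
    · nlinarith
    · positivity

theorem cross_ineq {a b : ℝ} (hba : b < a) (ha : a < 1) :
    GG1 b * GG a < GG1 a * GG b := by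
  have hb : b < 1 := hba.trans ha
  have h := ratio_mono (Set.mem_Iio.2 hb) (Set.mem_Iio.2 ha) hba
  rw [div_lt_div_iff₀ (GG_pos hb) (GG_pos ha)] at h
  linarith

lemma hasDerivAt_Phi {x : ℝ} (hx : x < 1) : HasDerivAt Phi (GG1 x) x := by
  apply (hasDerivAt_GG hx).congr_of_eventuallyEq
  filter_upwards [Iio_mem_nhds hx] with y hy
  exact phi_rep hy

lemma Phi_pos {x : ℝ} (hx : x < 1) : 0 < Phi x := by
  rw [phi_rep hx]; exact GG_pos hx

lemma eq_of_eqOn_Ioo {F G : ℝ → ℝ} {a b x : ℝ} (hab : a < b)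
    (h : ∀ y ∈ Set.Ioo a b, F y = G y) (hx : x ∈ Set.Icc a b)
    (hF : ContinuousAt F x) (hG : ContinuousAt G x) : F x = G x := by
  have hxcl : x ∈ closure (Set.Ioo a b) := by rw [closure_Ioo hab.ne]; exact hx
  have hne : (nhdsWithin x (Set.Ioo a b)).NeBot := mem_closure_iff_nhdsWithin_neBot.1 hxcl
  have h1 : Filter.Tendsto F (nhdsWithin x (Set.Ioo a b)) (nhds (F x)) :=
    hF.continuousWithinAt.tendsto
  have h2 : Filter.Tendsto G (nhdsWithin x (Set.Ioo a b)) (nhds (G x)) :=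
    hG.continuousWithinAt.tendsto
  have h3 : Filter.Tendsto F (nhdsWithin x (Set.Ioo a b)) (nhds (G x)) := by
    apply h2.congr'
    filter_upwards [eventually_mem_nhdsWithin] with y hy
    exact (h y hy).symm
  exact tendsto_nhds_unique h3 h1 |>.symm

section Tside
variable {ε : ℝ}

lemma two_lt_inv (hε0 : 0 < ε) (hε : ε < 1/16) : (2:ℝ) < 1/(8*ε) := by
  rw [lt_div_iff₀ (by positivity)]; nlinarith

lemma arg2_lt (hε0 : 0 < ε) (hε : ε < 1/16) {c : ℝ} (hc2 : c < 1/(8*ε)) : 8*ε*c < 1 := by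
  have h8 : (8*ε) * (1/(8*ε)) = 1 := by field_simp
  nlinarith [mul_lt_mul_of_pos_left hc2 (by positivity : (0:ℝ) < 8*ε)]

lemma arg1_lt (hε0 : 0 < ε) (hε : ε < 1/16) {b : ℝ} (hb : 2 - 1/(8*ε) < b) :
    -(8*ε*b) < 1 := by
  have h8 : (8*ε) * (1/(8*ε)) = 1 := by field_simp
  nlinarith [mul_lt_mul_of_pos_left hb (by positivity : (0:ℝ) < 8*ε)]

lemma hasDerivAt_tau2 (hε0 : 0 < ε) (hε : ε < 1/16) {c : ℝ} (hc2 : c < 1/(8*ε)) :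
    HasDerivAt (tau2 ε) ((2:ℝ)^((5:ℝ)/2) * (8*ε) * GG1 (8*ε*c)) c := by
  have harg := arg2_lt hε0 hε hc2
  have hlin : HasDerivAt (fun c : ℝ => 8*ε*c) (8*ε) c := by
    simpa using (hasDerivAt_id c).const_mul (8*ε)
  have h := ((hasDerivAt_Phi harg).comp c hlin).const_mul ((2:ℝ)^((5:ℝ)/2))
  have h2 : tau2 ε = fun c => (2:ℝ)^((5:ℝ)/2) * Phi (8*ε*c) := rfl
  rw [h2]
  exact h.congr_deriv (by ring)

lemma hasDerivAt_tau1_2sub (hε0 : 0 < ε) (hε : ε < 1/16) {c : ℝ}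
    (hc2 : c < 1/(8*ε)) :
    HasDerivAt (fun c => tau1 ε (2-c))
      ((2:ℝ)^((5:ℝ)/2) * (8*ε) * GG1 (-(8*ε*(2-c)))) c := by
  have harg := arg1_lt hε0 hε (b := 2-c) (by linarith)
  have hlin : HasDerivAt (fun c : ℝ => -(8*ε*(2-c))) (8*ε) c := by
    have hfun : (fun c : ℝ => -(8*ε*(2-c))) = fun c : ℝ => 8*ε*c - 16*ε := by
      funext y; ring
    rw [hfun]
    simpa using ((hasDerivAt_id c).const_mul (8*ε)).sub_const (16*ε)
  have h := ((hasDerivAt_Phi harg).comp c hlin).const_mul ((2:ℝ)^((5:ℝ)/2))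
  have h2 : (fun c => tau1 ε (2-c)) = fun c => (2:ℝ)^((5:ℝ)/2) * Phi (-(8*ε*(2-c))) := rfl
  rw [h2]
  exact h.congr_deriv (by ring)

lemma hasDerivAt_tau1 (hε0 : 0 < ε) (hε : ε < 1/16) {b : ℝ} (hb : 2 - 1/(8*ε) < b) :
    HasDerivAt (tau1 ε) (-((2:ℝ)^((5:ℝ)/2) * (8*ε) * GG1 (-(8*ε*b)))) b := by
  have harg := arg1_lt hε0 hε hb
  have hlin : HasDerivAt (fun b : ℝ => -(8*ε*b)) (-(8*ε)) b := by
    exact ((hasDerivAt_id b).const_mul (8*ε)).neg.congr_deriv (by ring)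
  have h := ((hasDerivAt_Phi harg).comp b hlin).const_mul ((2:ℝ)^((5:ℝ)/2))
  have h2 : tau1 ε = fun b => (2:ℝ)^((5:ℝ)/2) * Phi (-(8*ε*b)) := rfl
  rw [h2]
  exact h.congr_deriv (by ring)

lemma uIcc_sub (hε0 : 0 < ε) (hε : ε < 1/16) {c : ℝ}
    (hc : c ∈ Set.Ioo (2 - 1/(8*ε)) (1/(8*ε))) :
    Set.uIcc (0:ℝ) c ⊆ Set.Ioo (2 - 1/(8*ε)) (1/(8*ε)) := by
  have h2 := two_lt_inv hε0 hε
  intro u hu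
  rw [Set.mem_uIcc] at hu
  rcases hu with ⟨h1', h2'⟩ | ⟨h1', h2'⟩ <;>
    exact ⟨by linarith [hc.1, hc.2], by linarith [hc.1, hc.2]⟩

lemma cont_tau2_on (hε0 : 0 < ε) (hε : ε < 1/16) :
    ContinuousOn (tau2 ε) (Set.Ioo (2 - 1/(8*ε)) (1/(8*ε))) := fun c hc =>
  (hasDerivAt_tau2 hε0 hε hc.2).continuousAt.continuousWithinAt

lemma cont_tau1_on (hε0 : 0 < ε) (hε : ε < 1/16) :
    ContinuousOn (tau1 ε) (Set.Ioo (2 - 1/(8*ε)) (1/(8*ε))) := fun b hb =>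
  (hasDerivAt_tau1 hε0 hε hb.1).continuousAt.continuousWithinAt

lemma hasDerivAt_T2 (hε0 : 0 < ε) (hε : ε < 1/16) {c : ℝ}
    (hc : c ∈ Set.Ioo (2 - 1/(8*ε)) (1/(8*ε))) :
    HasDerivAt (T2 ε) (tau2 ε c) c := by
  apply intervalIntegral.integral_hasDerivAt_right
  · exact ((cont_tau2_on hε0 hε).mono (uIcc_sub hε0 hε hc)).intervalIntegrable
  · exact ContinuousOn.stronglyMeasurableAtFilter isOpen_Ioo (cont_tau2_on hε0 hε) c hc
  · exact (hasDerivAt_tau2 hε0 hε hc.2).continuousAt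

lemma hasDerivAt_T1 (hε0 : 0 < ε) (hε : ε < 1/16) {b : ℝ}
    (hb : b ∈ Set.Ioo (2 - 1/(8*ε)) (1/(8*ε))) :
    HasDerivAt (T1 ε) (tau1 ε b) b := by
  apply intervalIntegral.integral_hasDerivAt_right
  · exact ((cont_tau1_on hε0 hε).mono (uIcc_sub hε0 hε hb)).intervalIntegrable
  · exact ContinuousOn.stronglyMeasurableAtFilter isOpen_Ioo (cont_tau1_on hε0 hε) b hb
  · exact (hasDerivAt_tau1 hε0 hε hb.1).continuousAt

lemma mem_UU_of_Icc (hε0 : 0 < ε) (hε : ε < 1/16) {c : ℝ} (hc : c ∈ Set.Icc (0:ℝ) 2) :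
    c ∈ Set.Ioo (2 - 1/(8*ε)) (1/(8*ε)) := by
  have h2 := two_lt_inv hε0 hε
  exact ⟨by linarith [hc.1], by linarith [hc.2]⟩

lemma mem_UU_sub (hε0 : 0 < ε) (hε : ε < 1/16) {c : ℝ}
    (hc : c ∈ Set.Ioo (2 - 1/(8*ε)) (1/(8*ε))) :
    2 - c ∈ Set.Ioo (2 - 1/(8*ε)) (1/(8*ε)) :=
  ⟨by linarith [hc.2], by linarith [hc.1]⟩

lemma hasDerivAt_u (hε0 : 0 < ε) (hε : ε < 1/16) {c : ℝ}
    (hc : c ∈ Set.Ioo (2 - 1/(8*ε)) (1/(8*ε))) :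
    HasDerivAt (fun c => T1 ε (2-c)) (-(tau1 ε (2-c))) c := by
  have hlin : HasDerivAt (fun c : ℝ => 2-c) (-1) c := by
    simpa using (hasDerivAt_id c).const_sub 2
  have h := (hasDerivAt_T1 hε0 hε (mem_UU_sub hε0 hε hc)).comp c hlin
  exact h.congr_deriv (by ring)

end Tside


/-- For any `0 < ε < 1/16`, the (smooth, strictly decreasing) function `f_ε` characterized on
`[0, T¹_ε(2)]` by `T²_ε(c) = f_ε(T¹_ε(2-c))` for `c ∈ [0,2]` has strictly positive second
derivative on `[0, T¹_ε(2)]`, i.e. `f_ε` is strictly convex. -/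
theorem moment_map_graph_strictly_convex (ε : ℝ) (hε0 : 0 < ε) (hε : ε < 1 / 16)
    (f : ℝ → ℝ) (hf : ∀ c ∈ Set.Icc (0:ℝ) 2, T2 ε c = f (T1 ε (2 - c)))
    (hsmooth : ContDiff ℝ (⊤ : ℕ∞) f) :
    ∀ x ∈ Set.Icc (0:ℝ) (T1 ε 2), 0 < deriv (deriv f) x := by

  have hinf : ContDiff ℝ (((⊤ : ℕ∞)) : WithTop ℕ∞) f := hsmooth.of_le (by simp)
  have h1 := contDiff_infty_iff_deriv.mp hinf
  have hDf : Differentiable ℝ f := h1.1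
  have contDf : Continuous (deriv f) := h1.2.continuous
  have h2 := contDiff_infty_iff_deriv.mp h1.2
  have hDf1 : Differentiable ℝ (deriv f) := h2.1
  have contD2 : Continuous (deriv (deriv f)) := h2.2.continuous
  intro x hx
  have h2lt := two_lt_inv hε0 hε
  -- E1
  have hE1 : ∀ c' ∈ Set.Icc (0:ℝ) 2,
      deriv f (T1 ε (2-c')) * (-(tau1 ε (2-c'))) = tau2 ε c' := by
    intro c' hc'
    have hc'U := mem_UU_of_Icc hε0 hε hc'
    refine eq_of_eqOn_Ioo (F := fun c' => deriv f (T1 ε (2-c')) * (-(tau1 ε (2-c'))))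
      (G := tau2 ε) (by norm_num) ?_ hc' ?_ ?_
    · intro y hy
      have hyU := mem_UU_of_Icc hε0 hε ⟨hy.1.le, hy.2.le⟩
      have hu := hasDerivAt_u hε0 hε hyU
      have hF : HasDerivAt (fun c => f (T1 ε (2-c)))
          (deriv f (T1 ε (2-y)) * (-(tau1 ε (2-y)))) y :=
        (hDf (T1 ε (2-y))).hasDerivAt.comp y hu
      have hFT : HasDerivAt (fun c => f (T1 ε (2-c))) (tau2 ε y) y := by
        refine (hasDerivAt_T2 hε0 hε hyU).congr_of_eventuallyEq ?_
        filter_upwards [Ioo_mem_nhds hy.1 hy.2] with z hz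
        exact (hf z ⟨hz.1.le, hz.2.le⟩).symm
      exact hF.unique hFT
    · exact (contDf.continuousAt.comp (hasDerivAt_u hε0 hε hc'U).continuousAt).mul
        ((hasDerivAt_tau1_2sub hε0 hε hc'U.2).continuousAt.neg)
    · exact (hasDerivAt_tau2 hε0 hε hc'U.2).continuousAt
  -- E2
  have hE2 : ∀ c' ∈ Set.Icc (0:ℝ) 2,
      deriv (deriv f) (T1 ε (2-c')) * (tau1 ε (2-c'))^2
        + deriv f (T1 ε (2-c')) * (-((2:ℝ)^((5:ℝ)/2) * (8*ε) * GG1 (-(8*ε*(2-c')))))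
      = (2:ℝ)^((5:ℝ)/2) * (8*ε) * GG1 (8*ε*c') := by
    intro c' hc'
    have hc'U := mem_UU_of_Icc hε0 hε hc'
    refine eq_of_eqOn_Ioo
      (F := fun c' => deriv (deriv f) (T1 ε (2-c')) * (tau1 ε (2-c'))^2
        + deriv f (T1 ε (2-c')) * (-((2:ℝ)^((5:ℝ)/2) * (8*ε) * GG1 (-(8*ε*(2-c'))))))
      (G := fun c' => (2:ℝ)^((5:ℝ)/2) * (8*ε) * GG1 (8*ε*c')) (by norm_num) ?_ hc' ?_ ?_
    · intro y hy
      have hyU := mem_UU_of_Icc hε0 hε ⟨hy.1.le, hy.2.le⟩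
      have hu := hasDerivAt_u hε0 hε hyU
      have hdf' : HasDerivAt (fun c => deriv f (T1 ε (2-c)))
          (deriv (deriv f) (T1 ε (2-y)) * (-(tau1 ε (2-y)))) y :=
        (hDf1 (T1 ε (2-y))).hasDerivAt.comp (h₂ := deriv f) y hu
      have hτ : HasDerivAt (fun c => -(tau1 ε (2-c)))
          (-((2:ℝ)^((5:ℝ)/2) * (8*ε) * GG1 (-(8*ε*(2-y))))) y :=
        (hasDerivAt_tau1_2sub hε0 hε hyU.2).neg
      have hL := hdf'.mul hτ
      have hLf : HasDerivAt (fun c => deriv f (T1 ε (2-c)) * (-(tau1 ε (2-c))))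
          ((2:ℝ)^((5:ℝ)/2) * (8*ε) * GG1 (8*ε*y)) y := by
        refine (hasDerivAt_tau2 hε0 hε hyU.2).congr_of_eventuallyEq ?_
        filter_upwards [Ioo_mem_nhds hy.1 hy.2] with z hz
        exact hE1 z ⟨hz.1.le, hz.2.le⟩
      have huni := hL.unique hLf
      show deriv (deriv f) (T1 ε (2-y)) * (tau1 ε (2-y))^2
        + deriv f (T1 ε (2-y)) * (-((2:ℝ)^((5:ℝ)/2) * (8*ε) * GG1 (-(8*ε*(2-y)))))
        = (2:ℝ)^((5:ℝ)/2) * (8*ε) * GG1 (8*ε*y)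
      linear_combination huni
    · apply ContinuousAt.add
      · exact ((contD2.continuousAt.comp (hasDerivAt_u hε0 hε hc'U).continuousAt)).mul
          (((hasDerivAt_tau1_2sub hε0 hε hc'U.2).continuousAt).pow 2)
      · refine ((contDf.continuousAt.comp (hasDerivAt_u hε0 hε hc'U).continuousAt)).mul ?_
        refine ContinuousAt.neg ?_
        refine ContinuousAt.mul continuousAt_const ?_
        show ContinuousAt (GG1 ∘ fun x : ℝ => -(8*ε*(2-x))) c'
        refine ContinuousAt.comp ?_ (by fun_prop)
        exact (hasDerivAt_GG1 (arg1_lt hε0 hε (by linarith [hc'U.2] :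
          2 - 1/(8*ε) < 2-c'))).continuousAt
    · refine ContinuousAt.mul continuousAt_const ?_
      show ContinuousAt (GG1 ∘ fun x : ℝ => 8*ε*x) c'
      refine ContinuousAt.comp ?_ (by fun_prop)
      exact (hasDerivAt_GG1 (arg2_lt hε0 hε hc'U.2)).continuousAt
  -- surjectivity
  have hucontOn : ContinuousOn (fun c => T1 ε (2-c)) (Set.Icc 0 2) := fun c hc =>
    (hasDerivAt_u hε0 hε (mem_UU_of_Icc hε0 hε hc)).continuousAt.continuousWithinAt
  have hmap := intermediate_value_Icc' (by norm_num : (0:ℝ) ≤ 2) hucontOn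
  have him : x ∈ Set.Icc ((fun c => T1 ε (2-c)) 2) ((fun c => T1 ε (2-c)) 0) := by
    show x ∈ Set.Icc (T1 ε (2-2)) (T1 ε (2-0))
    rw [show (2:ℝ)-2 = 0 by norm_num, show (2:ℝ)-0 = 2 by norm_num,
      show T1 ε 0 = 0 from intervalIntegral.integral_same]
    exact hx
  obtain ⟨c, hcIcc, hcx0⟩ := hmap him
  have hcx : T1 ε (2-c) = x := hcx0
  -- final computation
  have hcU := mem_UU_of_Icc hε0 hε hcIcc
  have ha1 : 8*ε*c < 1 := arg2_lt hε0 hε hcU.2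
  have hb1 : -(8*ε*(2-c)) < 1 := arg1_lt hε0 hε (by linarith [hcU.2])
  have hba : -(8*ε*(2-c)) < 8*ε*c := by nlinarith [hε0]
  have hτ1pos : 0 < tau1 ε (2-c) := by
    have hphp := Phi_pos hb1
    exact mul_pos (by positivity) hphp
  have hE1c := hE1 c hcIcc
  have hE2c := hE2 c hcIcc
  rw [hcx] at hE1c hE2c
  have hga := GG_pos ha1
  have hgb := GG_pos hb1
  have hKne : ((2:ℝ)^((5:ℝ)/2)) ≠ 0 := by positivity
  have ht2 : tau2 ε c = (2:ℝ)^((5:ℝ)/2) * GG (8*ε*c) := by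
    show (2:ℝ)^((5:ℝ)/2) * Phi (8*ε*c) = _
    rw [phi_rep ha1]
  have ht1 : tau1 ε (2-c) = (2:ℝ)^((5:ℝ)/2) * GG (-(8*ε*(2-c))) := by
    show (2:ℝ)^((5:ℝ)/2) * Phi (-(8*ε*(2-c))) = _
    rw [phi_rep hb1]
  have hDfc : deriv f x = -(tau2 ε c) / tau1 ε (2-c) := by
    rw [eq_div_iff hτ1pos.ne']
    linear_combination (-1 : ℝ) * hE1c
  have hDfx : deriv f x * GG (-(8*ε*(2-c))) = -(GG (8*ε*c)) := by
    rw [hDfc, ht1, ht2]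
    field_simp
  have hmul : deriv (deriv f) x * (tau1 ε (2-c))^2 * GG (-(8*ε*(2-c)))
      = (2:ℝ)^((5:ℝ)/2) * (8*ε) *
        (GG1 (8*ε*c) * GG (-(8*ε*(2-c))) - GG (8*ε*c) * GG1 (-(8*ε*(2-c)))) := by
    linear_combination (GG (-(8*ε*(2-c)))) * hE2c
      + ((2:ℝ)^((5:ℝ)/2) * (8*ε) * GG1 (-(8*ε*(2-c)))) * hDfx
  have hcross := cross_ineq hba ha1
  have hposR : 0 < (2:ℝ)^((5:ℝ)/2) * (8*ε) *
      (GG1 (8*ε*c) * GG (-(8*ε*(2-c))) - GG (8*ε*c) * GG1 (-(8*ε*(2-c)))) := by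
    apply mul_pos (by positivity)
    nlinarith [hcross]
  have hτsq : 0 < (tau1 ε (2-c))^2 := by positivity
  nlinarith [hmul, hposR, hτsq, hgb, mul_pos hτsq hgb]
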